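/- arXiv:1905.07499 — 2 statements merged into one kernel-verified Lean document; each statement's English description precedes it below -/
import Mathlib

section
/- Let σ_β > 0, τ > 0, and let λ₁ ≥ λ₂ ≥ ⋯ ≥ λ_D ≥ 0 be the singular values of the design matrix X. For M ≤ D, let λ̄ᵢ = λ_{M+i} for i = 1,…,D−M. Then the difference in differential entropies between the approximate posterior Σ̃_N = (σ_β⁻²I + τ U diag(λ₁²,…,λ_M²) Uᵀ)⁻¹ and the exact posterior Σ_N = (σ_β⁻²I + τ XᵀX)⁻¹ equals (1/2) Σ_{i=1}^{D−M} log(1 + τ σ_β² λ̄ᵢ²), and satisfies 0 ≤ H(p̃) − H(p) ≤ (τ σ_β²/2) Σ_{i=1}^{D−M} λ̄ᵢ². -/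
/-!
Write the exact precision matrix as `σβ⁻² (I + s U Λ² Uᵀ + s Ū Λ̄² Ūᵀ)` with `s = τ σβ²`.
Because `Uᵀ Ū = 0`, the two low-rank terms multiply to zero, so this is the product
`(I + s U Λ² Uᵀ)(I + s Ū Λ̄² Ūᵀ)`; by the Weinstein–Aronszajn identity `det (I + A B) = det (I + B A)`
and `Ūᵀ Ū = I`, the second factor has determinant `∏ᵢ (1 + s λ̄ᵢ²)`. Hence the two precision
determinants differ exactly by that factor, the entropy gap is half its logarithm, and the bounds are
`0 ≤ log (1 + x) ≤ x` termwise.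
-/

open Matrix

/-- Differential entropy of a `D`-dimensional Gaussian with covariance `S`:
`H = (1/2) log((2πe)^D det S)`. -/
noncomputable def gaussianEntropy {D : ℕ} (S : Matrix (Fin D) (Fin D) ℝ) : ℝ :=
  (1 / 2) * Real.log ((2 * Real.pi * Real.exp 1) ^ D * S.det)

namespace Matrix

variable {m n k : Type*} [Fintype n] [Fintype k]

theorem smul_mul_diagonal_mul_transpose {R : Type*} [CommSemiring R] [DecidableEq n] (r : R)
    (V : Matrix m n R) (d : n → R) :
    r • (V * diagonal d * Vᵀ) = V * diagonal (fun i => r * d i) * Vᵀ := by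
  rw [show diagonal (fun i => r * d i) = r • diagonal d from diagonal_smul r d, Matrix.mul_smul,
    Matrix.smul_mul]

variable [Fintype m] [DecidableEq m]

theorem one_add_mul_one_add_of_transpose_mul_eq_zero {R : Type*} [Semiring R]
    (V : Matrix m n R) (W : Matrix m k R) (A : Matrix n n R) (B : Matrix k k R)
    (h : Vᵀ * W = 0) :
    (1 + V * A * Vᵀ) * (1 + W * B * Wᵀ) = 1 + (V * A * Vᵀ + W * B * Wᵀ) := by
  have hcross : V * A * Vᵀ * (W * B * Wᵀ) = 0 := by
    simp only [Matrix.mul_assoc, ← Matrix.mul_assoc Vᵀ W, h, Matrix.zero_mul, Matrix.mul_zero]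
  rw [Matrix.add_mul, Matrix.mul_add, Matrix.mul_add, hcross, Matrix.one_mul, Matrix.one_mul,
    Matrix.mul_one, add_zero, add_assoc, add_comm (W * B * Wᵀ)]

variable {R : Type*} [CommRing R] [DecidableEq n] [DecidableEq k]

theorem det_one_add_mul_diagonal_mul_transpose (V : Matrix m n R) (hV : Vᵀ * V = 1)
    (d : n → R) : det (1 + V * diagonal d * Vᵀ) = ∏ i, (1 + d i) := by
  rw [det_one_add_mul_comm, ← Matrix.mul_assoc, hV, Matrix.one_mul, ← diagonal_one,
    diagonal_add, det_diagonal]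

theorem det_one_add_add_mul_diagonal_mul_transpose (V : Matrix m n R) (W : Matrix m k R)
    (hW : Wᵀ * W = 1) (hVW : Vᵀ * W = 0) (a : n → R) (b : k → R) :
    det (1 + (V * diagonal a * Vᵀ + W * diagonal b * Wᵀ)) =
      det (1 + V * diagonal a * Vᵀ) * ∏ i, (1 + b i) := by
  rw [← one_add_mul_one_add_of_transpose_mul_eq_zero V W _ _ hVW, det_mul,
    det_one_add_mul_diagonal_mul_transpose W hW]

end Matrix

section Precision

variable {K : Type*} [Field K] {m n k : Type*} [Fintype m] [DecidableEq m]
  [Fintype n] [DecidableEq n] [Fintype k] [DecidableEq k]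

theorem det_inv_smul_one_add_smul {c : K} (hc : c ≠ 0) (τ : K) (A : Matrix m m K) :
    det (c⁻¹ • (1 : Matrix m m K) + τ • A) = c⁻¹ ^ Fintype.card m * det (1 + (τ * c) • A) := by
  rw [← det_smul, smul_add, smul_smul, mul_left_comm, inv_mul_cancel₀ hc, mul_one]

theorem det_precision_mul_diagonal_mul_transpose {c : K} (hc : c ≠ 0) (τ : K)
    (V : Matrix m n K) (hV : Vᵀ * V = 1) (d : n → K) :
    det (c⁻¹ • (1 : Matrix m m K) + τ • (V * diagonal d * Vᵀ)) =
      c⁻¹ ^ Fintype.card m * ∏ i, (1 + τ * c * d i) := by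
  rw [det_inv_smul_one_add_smul hc, smul_mul_diagonal_mul_transpose,
    det_one_add_mul_diagonal_mul_transpose V hV]

theorem det_precision_add_mul_diagonal_mul_transpose {c : K} (hc : c ≠ 0) (τ : K)
    (V : Matrix m n K) (W : Matrix m k K) (hW : Wᵀ * W = 1) (hVW : Vᵀ * W = 0)
    (a : n → K) (b : k → K) :
    det (c⁻¹ • (1 : Matrix m m K) + τ • (V * diagonal a * Vᵀ + W * diagonal b * Wᵀ)) =
      det (c⁻¹ • (1 : Matrix m m K) + τ • (V * diagonal a * Vᵀ)) * ∏ i, (1 + τ * c * b i) := by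
  rw [det_inv_smul_one_add_smul hc, det_inv_smul_one_add_smul hc, smul_add,
    smul_mul_diagonal_mul_transpose, smul_mul_diagonal_mul_transpose,
    det_one_add_add_mul_diagonal_mul_transpose V W hW hVW, mul_assoc]

end Precision

theorem gaussianEntropy_inv_sub_gaussianEntropy_inv {D : ℕ} {A B : Matrix (Fin D) (Fin D) ℝ}
    {q : ℝ} (hA : A.det ≠ 0) (hq : q ≠ 0) (hB : B.det = A.det * q) :
    gaussianEntropy A⁻¹ - gaussianEntropy B⁻¹ = 1 / 2 * Real.log q := by
  have hC : (2 * Real.pi * Real.exp 1) ^ D ≠ 0 := by positivity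
  simp only [gaussianEntropy, det_nonsing_inv, Ring.inverse_eq_inv, hB]
  rw [Real.log_mul hC (inv_ne_zero hA), Real.log_mul hC (inv_ne_zero (mul_ne_zero hA hq)),
    Real.log_inv, Real.log_inv, Real.log_mul hA hq]
  ring

theorem Real.log_one_add_le_self {x : ℝ} (hx : 0 ≤ x) : Real.log (1 + x) ≤ x := by
  linarith [Real.log_le_sub_one_of_pos (by linarith : 0 < 1 + x)]

theorem entropy_information_loss_general {D N M K : ℕ}
    (σβ τ : ℝ) (hσ : 0 < σβ) (hτ : 0 < τ)
    (X : Matrix (Fin N) (Fin D) ℝ)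
    (U : Matrix (Fin D) (Fin M) ℝ) (Ubar : Matrix (Fin D) (Fin K) ℝ)
    (lam : Fin M → ℝ) (lbar : Fin K → ℝ)
    (hU : Uᵀ * U = 1) (hUbar : Ubarᵀ * Ubar = 1) (hperp : Uᵀ * Ubar = 0)
    (hXtX : Xᵀ * X = U * diagonal (fun i => lam i ^ 2) * Uᵀ +
      Ubar * diagonal (fun i => lbar i ^ 2) * Ubarᵀ) :
    let SN := ((σβ ^ 2)⁻¹ • (1 : Matrix (Fin D) (Fin D) ℝ) + τ • (Xᵀ * X))⁻¹
    let SNt := ((σβ ^ 2)⁻¹ • (1 : Matrix (Fin D) (Fin D) ℝ) +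
      τ • (U * diagonal (fun i => lam i ^ 2) * Uᵀ))⁻¹
    gaussianEntropy SNt - gaussianEntropy SN =
        (1 / 2) * ∑ i, Real.log (1 + τ * σβ ^ 2 * lbar i ^ 2) ∧
      0 ≤ gaussianEntropy SNt - gaussianEntropy SN ∧
      gaussianEntropy SNt - gaussianEntropy SN ≤ (τ * σβ ^ 2 / 2) * ∑ i, lbar i ^ 2 := by
  intro SN SNt
  have hc : σβ ^ 2 ≠ 0 := by positivity
  have hterm : ∀ i, 0 ≤ τ * σβ ^ 2 * lbar i ^ 2 := fun i => by positivity
  have hfactor : ∀ i, 0 < 1 + τ * σβ ^ 2 * lbar i ^ 2 := fun i => by linarith [hterm i]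
  have hdetSNt : det ((σβ ^ 2)⁻¹ • (1 : Matrix (Fin D) (Fin D) ℝ) +
      τ • (U * diagonal (fun i => lam i ^ 2) * Uᵀ)) ≠ 0 := by
    rw [det_precision_mul_diagonal_mul_transpose hc τ U hU]
    positivity
  have hgap : gaussianEntropy SNt - gaussianEntropy SN =
      1 / 2 * ∑ i, Real.log (1 + τ * σβ ^ 2 * lbar i ^ 2) := by
    rw [gaussianEntropy_inv_sub_gaussianEntropy_inv hdetSNt
      (Finset.prod_ne_zero_iff.mpr fun i _ => (hfactor i).ne')
      (hXtX ▸ det_precision_add_mul_diagonal_mul_transpose hc τ U Ubar hUbar hperp _ _),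
      Real.log_prod fun i _ => (hfactor i).ne']
  refine ⟨hgap, ?_, ?_⟩
  · rw [hgap]
    exact mul_nonneg one_half_pos.le
      (Finset.sum_nonneg fun i _ => Real.log_nonneg (le_add_of_nonneg_right (hterm i)))
  · calc gaussianEntropy SNt - gaussianEntropy SN
        = 1 / 2 * ∑ i, Real.log (1 + τ * σβ ^ 2 * lbar i ^ 2) := hgap
      _ ≤ 1 / 2 * ∑ i, τ * σβ ^ 2 * lbar i ^ 2 := by
        gcongr with i
        exact Real.log_one_add_le_self (hterm i)
      _ = τ * σβ ^ 2 / 2 * ∑ i, lbar i ^ 2 := by rw [← Finset.mul_sum]; ring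

/-- The entropy gap between the low-rank approximate posterior and the exact
posterior equals `(1/2) Σᵢ log(1 + τ σβ² λ̄ᵢ²)` and lies between `0` and
`(τ σβ²/2) Σᵢ λ̄ᵢ²`. -/
theorem entropy_information_loss {D N M K : ℕ}
    (σβ τ : ℝ) (hσ : 0 < σβ) (hτ : 0 < τ)
    (X : Matrix (Fin N) (Fin D) ℝ)
    (U : Matrix (Fin D) (Fin M) ℝ) (Ubar : Matrix (Fin D) (Fin K) ℝ)
    (lam : Fin M → ℝ) (lbar : Fin K → ℝ)
    (hlam : ∀ i, 0 ≤ lam i) (hlbar : ∀ i, 0 ≤ lbar i)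
    (hU : Uᵀ * U = 1) (hUbar : Ubarᵀ * Ubar = 1) (hperp : Uᵀ * Ubar = 0)
    (hcomplete : U * Uᵀ + Ubar * Ubarᵀ = 1)
    (hXtX : Xᵀ * X = U * diagonal (fun i => lam i ^ 2) * Uᵀ +
      Ubar * diagonal (fun i => lbar i ^ 2) * Ubarᵀ) :
    let SN := ((σβ ^ 2)⁻¹ • (1 : Matrix (Fin D) (Fin D) ℝ) + τ • (Xᵀ * X))⁻¹
    let SNt := ((σβ ^ 2)⁻¹ • (1 : Matrix (Fin D) (Fin D) ℝ) +
      τ • (U * diagonal (fun i => lam i ^ 2) * Uᵀ))⁻¹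
    gaussianEntropy SNt - gaussianEntropy SN =
        (1 / 2) * ∑ i, Real.log (1 + τ * σβ ^ 2 * lbar i ^ 2) ∧
      0 ≤ gaussianEntropy SNt - gaussianEntropy SN ∧
      gaussianEntropy SNt - gaussianEntropy SN ≤ (τ * σβ ^ 2 / 2) * ∑ i, lbar i ^ 2 :=
  entropy_information_loss_general σβ τ hσ hτ X U Ubar lam lbar hU hUbar hperp hXtX
end

section
/- In conjugate Gaussian linear regression, the difference of the gradients of the exact and approximate log posteriors satisfies, for all β: ‖∇_β log p̃(β|X,Y) − ∇_β log p(β|X,Y)‖₂ = τ ‖Ū diag(λ̄⊙λ̄) Ūᵀ β − Ū diag(λ̄) V̄ᵀ Y‖₂ ≤ τ(λ̄₁² ‖Ūᵀ β‖₂ + λ̄₁ ‖V̄ᵀ Y‖₂). -/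
/-!
With `P = U Uᵀ`, orthonormality gives `P Xᵀ = U Λ Vᵀ`, so the gradient gap is
`τ ((XᵀX - P XᵀX P) β - (Xᵀ - P Xᵀ) Y)`, where `Xᵀ - P Xᵀ = Ū Λ̄ V̄ᵀ` and, because `V ⊥ V̄` kills
the cross terms of `XᵀX`, `XᵀX - P XᵀX P = Ū Λ̄² Ūᵀ`. Factoring out the isometry `Ū`, the bound
is the triangle inequality together with `λ̄ᵢ ≤ λ̄₁`.
-/

open Matrix

section Orthonormal

variable {R : Type*} [CommRing R] {d n m k : Type*}

theorem mul_transpose_mul_add_eq_of_orthonormal [Fintype d] [Fintype m] [Fintype k]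
    [DecidableEq m] {U : Matrix d m R} {Ubar : Matrix d k R}
    (hU : Uᵀ * U = 1) (hUperp : Uᵀ * Ubar = 0) (A : Matrix m n R) (B : Matrix k n R) :
    U * Uᵀ * (U * A + Ubar * B) = U * A := by
  rw [Matrix.mul_add, Matrix.mul_assoc, ← Matrix.mul_assoc Uᵀ, hU, Matrix.mul_assoc U,
    ← Matrix.mul_assoc Uᵀ Ubar, hUperp, Matrix.one_mul, Matrix.zero_mul, Matrix.mul_zero,
    add_zero]

theorem transpose_mul_self_sub_of_transpose_eq_add [Fintype n] {S : Matrix n d R}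
    {A B : Matrix d n R} (h : Sᵀ = A + B) (hAB : A * Bᵀ = 0) :
    Sᵀ * S - A * Aᵀ = B * Bᵀ := by
  have hBA : B * Aᵀ = 0 := by rw [← transpose_transpose B, ← transpose_mul, hAB, transpose_zero]
  rw [← transpose_transpose S, transpose_transpose Sᵀ, h, transpose_add, Matrix.add_mul,
    Matrix.mul_add, Matrix.mul_add, hAB, hBA]
  abel

variable [Fintype d] [Fintype m] [Fintype k] [DecidableEq m] [DecidableEq k]
  {X : Matrix n d R} {U : Matrix d m R} {Ubar : Matrix d k R} {V : Matrix n m R}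
  {Vbar : Matrix n k R} {lam : m → R} {lbar : k → R}

theorem proj_mul_transpose_eq_of_svd (hU : Uᵀ * U = 1) (hUperp : Uᵀ * Ubar = 0)
    (hX : Xᵀ = U * diagonal lam * Vᵀ + Ubar * diagonal lbar * Vbarᵀ) :
    U * Uᵀ * Xᵀ = U * diagonal lam * Vᵀ := by
  rw [hX, Matrix.mul_assoc U (diagonal lam), Matrix.mul_assoc Ubar,
    mul_transpose_mul_add_eq_of_orthonormal hU hUperp]

theorem transpose_sub_proj_mul_transpose_eq_of_svd (hU : Uᵀ * U = 1) (hUperp : Uᵀ * Ubar = 0)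
    (hX : Xᵀ = U * diagonal lam * Vᵀ + Ubar * diagonal lbar * Vbarᵀ) :
    Xᵀ - U * Uᵀ * Xᵀ = Ubar * diagonal lbar * Vbarᵀ := by
  rw [proj_mul_transpose_eq_of_svd hU hUperp hX, hX, add_sub_cancel_left]

theorem gram_sub_proj_gram_proj_eq_of_svd [Fintype n] (hU : Uᵀ * U = 1) (hUperp : Uᵀ * Ubar = 0)
    (hVbar : Vbarᵀ * Vbar = 1) (hVperp : Vᵀ * Vbar = 0)
    (hX : Xᵀ = U * diagonal lam * Vᵀ + Ubar * diagonal lbar * Vbarᵀ) :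
    Xᵀ * X - U * Uᵀ * (Xᵀ * X) * U * Uᵀ =
      Ubar * diagonal (fun j => lbar j * lbar j) * Ubarᵀ := by
  have hproj : U * Uᵀ * (Xᵀ * X) * U * Uᵀ = (U * Uᵀ * Xᵀ) * (U * Uᵀ * Xᵀ)ᵀ := by
    simp only [transpose_mul, transpose_transpose, Matrix.mul_assoc]
  have hcross : U * diagonal lam * Vᵀ * (Ubar * diagonal lbar * Vbarᵀ)ᵀ = 0 := by
    simp only [transpose_mul, transpose_transpose, Matrix.mul_assoc, ← Matrix.mul_assoc Vᵀ Vbar,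
      hVperp, Matrix.zero_mul, Matrix.mul_zero]
  rw [hproj, proj_mul_transpose_eq_of_svd hU hUperp hX,
    transpose_mul_self_sub_of_transpose_eq_add hX hcross]
  simp only [transpose_mul, diagonal_transpose, transpose_transpose, Matrix.mul_assoc,
    ← Matrix.mul_assoc Vbarᵀ Vbar, hVbar, Matrix.one_mul, ← Matrix.mul_assoc (diagonal lbar),
    diagonal_mul_diagonal]

end Orthonormal

theorem sqrt_sum_sq_eq_norm_toLp {n : Type*} [Fintype n] (x : n → ℝ) :
    √(∑ i, x i ^ 2) = ‖WithLp.toLp 2 x‖ := by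
  simp [EuclideanSpace.norm_eq]

theorem norm_toLp_mulVec_of_transpose_mul_self {m n : Type*} [Fintype m] [Fintype n]
    [DecidableEq n] {A : Matrix m n ℝ} (hA : Aᵀ * A = 1) (x : n → ℝ) :
    ‖WithLp.toLp 2 (A *ᵥ x)‖ = ‖WithLp.toLp 2 x‖ := by
  have hdot : (A *ᵥ x) ⬝ᵥ (A *ᵥ x) = x ⬝ᵥ x := by
    rw [dotProduct_mulVec, ← vecMul_transpose, vecMul_vecMul, hA, vecMul_one]
  rw [← sqrt_sum_sq_eq_norm_toLp, ← sqrt_sum_sq_eq_norm_toLp]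
  simpa [dotProduct, sq] using congrArg Real.sqrt hdot

theorem norm_toLp_diagonal_mulVec_le {n : Type*} [Fintype n] [DecidableEq n] {d : n → ℝ} {c : ℝ}
    (hc : 0 ≤ c) (hd : ∀ i, |d i| ≤ c) (x : n → ℝ) :
    ‖WithLp.toLp 2 (diagonal d *ᵥ x)‖ ≤ c * ‖WithLp.toLp 2 x‖ := by
  rw [← sqrt_sum_sq_eq_norm_toLp, ← sqrt_sum_sq_eq_norm_toLp, ← Real.sqrt_sq hc,
    ← Real.sqrt_mul (sq_nonneg c), Finset.mul_sum]
  refine Real.sqrt_le_sqrt (Finset.sum_le_sum fun i _ => ?_)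
  rw [mulVec_diagonal, mul_pow]
  exact mul_le_mul_of_nonneg_right (sq_le_sq' (abs_le.mp (hd i)).1 (abs_le.mp (hd i)).2)
    (sq_nonneg _)


theorem gradient_difference_bound_general {D N M K : ℕ}
    (τ : ℝ) (hτ : 0 < τ)
    (X : Matrix (Fin N) (Fin D) ℝ) (Y : Fin N → ℝ)
    (U : Matrix (Fin D) (Fin M) ℝ) (Ubar : Matrix (Fin D) (Fin K) ℝ)
    (V : Matrix (Fin N) (Fin M) ℝ) (Vbar : Matrix (Fin N) (Fin K) ℝ)
    (lam : Fin M → ℝ) (lbar : Fin K → ℝ)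
    (hlbar : ∀ i, 0 ≤ lbar i)
    (hU : Uᵀ * U = 1) (hUbar : Ubarᵀ * Ubar = 1) (hUperp : Uᵀ * Ubar = 0)
    (hVbar : Vbarᵀ * Vbar = 1) (hVperp : Vᵀ * Vbar = 0)
    (hX : Xᵀ = U * diagonal lam * Vᵀ + Ubar * diagonal lbar * Vbarᵀ)
    (i₁ : Fin K) (hmax : ∀ i, lbar i ≤ lbar i₁)
    (β : Fin D → ℝ) :
    let gradDiff : Fin D → ℝ :=
      (-τ) • ((U * Uᵀ * (Xᵀ * X) * U * Uᵀ) *ᵥ β - (U * Uᵀ * Xᵀ) *ᵥ Y)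
        + τ • ((Xᵀ * X) *ᵥ β - Xᵀ *ᵥ Y)
    Real.sqrt (∑ i, gradDiff i ^ 2) =
        τ * Real.sqrt (∑ i,
          (((Ubar * diagonal (fun j => lbar j * lbar j) * Ubarᵀ) *ᵥ β
            - (Ubar * diagonal lbar * Vbarᵀ) *ᵥ Y) i) ^ 2) ∧
      Real.sqrt (∑ i, gradDiff i ^ 2) ≤
        τ * (lbar i₁ ^ 2 * Real.sqrt (∑ j, ((Ubarᵀ *ᵥ β) j) ^ 2)
          + lbar i₁ * Real.sqrt (∑ j, ((Vbarᵀ *ᵥ Y) j) ^ 2)) := by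
  intro gradDiff
  have hgrad : gradDiff = τ • ((Ubar * diagonal (fun j => lbar j * lbar j) * Ubarᵀ) *ᵥ β
      - (Ubar * diagonal lbar * Vbarᵀ) *ᵥ Y) := by
    rw [← gram_sub_proj_gram_proj_eq_of_svd hU hUperp hVbar hVperp hX,
      ← transpose_sub_proj_mul_transpose_eq_of_svd hU hUperp hX, sub_mulVec, sub_mulVec]
    module
  have hfactor : (Ubar * diagonal (fun j => lbar j * lbar j) * Ubarᵀ) *ᵥ β
      - (Ubar * diagonal lbar * Vbarᵀ) *ᵥ Y = Ubar *ᵥ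
        (diagonal (fun j => lbar j * lbar j) *ᵥ (Ubarᵀ *ᵥ β) - diagonal lbar *ᵥ (Vbarᵀ *ᵥ Y)) := by
    simp only [mulVec_sub, mulVec_mulVec, Matrix.mul_assoc]
  simp only [sqrt_sum_sq_eq_norm_toLp]
  rw [hgrad, WithLp.toLp_smul, norm_smul, Real.norm_of_nonneg hτ.le]
  refine ⟨rfl, mul_le_mul_of_nonneg_left ?_ hτ.le⟩
  rw [hfactor, norm_toLp_mulVec_of_transpose_mul_self hUbar, WithLp.toLp_sub]
  refine (norm_sub_le _ _).trans (add_le_add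
    (norm_toLp_diagonal_mulVec_le (sq_nonneg _) (fun j => ?_) _)
    (norm_toLp_diagonal_mulVec_le (hlbar i₁) (fun j => ?_) _))
  · rw [abs_of_nonneg (mul_self_nonneg _), sq]
    exact mul_self_le_mul_self (hlbar j) (hmax j)
  · rw [abs_of_nonneg (hlbar j)]
    exact hmax j

/-- In conjugate Gaussian linear regression, the difference of the gradients
of the approximate and exact log posteriors (with common prior) equals
`τ (Ū diag(λ̄⊙λ̄) Ūᵀ β − Ū diag(λ̄) V̄ᵀ Y)` in norm, and is bounded by
`τ (λ̄₁² ‖Ūᵀ β‖ + λ̄₁ ‖V̄ᵀ Y‖)`. -/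
theorem gradient_difference_bound {D N M K : ℕ}
    (τ : ℝ) (hτ : 0 < τ)
    (X : Matrix (Fin N) (Fin D) ℝ) (Y : Fin N → ℝ)
    (U : Matrix (Fin D) (Fin M) ℝ) (Ubar : Matrix (Fin D) (Fin K) ℝ)
    (V : Matrix (Fin N) (Fin M) ℝ) (Vbar : Matrix (Fin N) (Fin K) ℝ)
    (lam : Fin M → ℝ) (lbar : Fin K → ℝ)
    (hlam : ∀ i, 0 ≤ lam i) (hlbar : ∀ i, 0 ≤ lbar i)
    (hU : Uᵀ * U = 1) (hUbar : Ubarᵀ * Ubar = 1) (hUperp : Uᵀ * Ubar = 0)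
    (hV : Vᵀ * V = 1) (hVbar : Vbarᵀ * Vbar = 1) (hVperp : Vᵀ * Vbar = 0)
    (hX : Xᵀ = U * diagonal lam * Vᵀ + Ubar * diagonal lbar * Vbarᵀ)
    (i₁ : Fin K) (hmax : ∀ i, lbar i ≤ lbar i₁)
    (β : Fin D → ℝ) :
    let gradDiff : Fin D → ℝ :=
      (-τ) • ((U * Uᵀ * (Xᵀ * X) * U * Uᵀ) *ᵥ β - (U * Uᵀ * Xᵀ) *ᵥ Y)
        + τ • ((Xᵀ * X) *ᵥ β - Xᵀ *ᵥ Y)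
    Real.sqrt (∑ i, gradDiff i ^ 2) =
        τ * Real.sqrt (∑ i,
          (((Ubar * diagonal (fun j => lbar j * lbar j) * Ubarᵀ) *ᵥ β
            - (Ubar * diagonal lbar * Vbarᵀ) *ᵥ Y) i) ^ 2) ∧
      Real.sqrt (∑ i, gradDiff i ^ 2) ≤
        τ * (lbar i₁ ^ 2 * Real.sqrt (∑ j, ((Ubarᵀ *ᵥ β) j) ^ 2)
          + lbar i₁ * Real.sqrt (∑ j, ((Vbarᵀ *ᵥ Y) j) ^ 2)) :=
  gradient_difference_bound_general τ hτ X Y U Ubar V Vbar lam lbar hlbar hU hUbar hUperp hVbar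
    hVperp hX i₁ hmax β
end
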